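/- Assume n ≤ m, v_max < μ, and 0 < ε ≤ 1/5. Let π* be an optimal allocation and let π be an allocation satisfying |V_i(π) − V_i(π*)| ≤ 2ε·v_max for every agent i. Then f(π) · ((1/n) · Σ_i 1/V_i(π)) ≤ 24, i.e., the ratio of the geometric mean of the valuations (V_i(π)) to their harmonic mean is at most 24. -/

import Mathlib

/-- The valuation of agent `i` under allocation `π`: the sum of utilities of goods assigned to `i`. -/
def V {G A : Type*} [Fintype G] [DecidableEq A] (v : G → ℝ) (π : G → A) (i : A) : ℝ :=
  ∑ j ∈ Finset.univ.filter (fun j => π j = i), v j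

/-- Nash social welfare: geometric mean of agents' valuations. -/
noncomputable def NSW {G A : Type*} [Fintype G] [Fintype A] [DecidableEq A]
    (v : G → ℝ) (π : G → A) : ℝ :=
  (∏ i, V v π i) ^ ((1 : ℝ) / (Fintype.card A))

lemma V_nonneg {m n : ℕ} (v : Fin m → ℝ) (hv : ∀ j, 0 < v j) (π : Fin m → Fin n) (i : Fin n) :
    0 ≤ V v π i :=
  Finset.sum_nonneg fun j _ => (hv j).le

lemma V_update {m n : ℕ} (v : Fin m → ℝ) (π : Fin m → Fin n) (j : Fin m) (i l : Fin n) :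
    V v (Function.update π j i) l
      = V v π l + (if i = l then v j else 0) - (if π j = l then v j else 0) := by
  classical
  have key : ∑ j' : Fin m, ((if Function.update π j i j' = l then v j' else 0)
      - (if π j' = l then v j' else 0))
      = (if i = l then v j else 0) - (if π j = l then v j else 0) := by
    rw [Finset.sum_eq_single_of_mem j (Finset.mem_univ j)]
    · simp
    · intro b _ hb; simp [Function.update_of_ne hb]
  rw [Finset.sum_sub_distrib] at key
  unfold V
  rw [Finset.sum_filter, Finset.sum_filter]
  linarith

/-- The ratio of the geometric mean of the valuations of `π` to their harmonic mean is at most 24. -/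
theorem stmt8 (n m : ℕ) (hn : 0 < n) (hnm : n ≤ m)
    (v : Fin m → ℝ) (hv : ∀ j, 0 < v j)
    (vmax : ℝ) (hvmax : IsGreatest (Set.range v) vmax)
    (hlt : vmax < (∑ j, v j) / n)
    (ε : ℝ)
    (πs : Fin m → Fin n)
    (hopt : ∀ π' : Fin m → Fin n, NSW v π' ≤ NSW v πs)
    (π : Fin m → Fin n)
    (hclose : ∀ i, |V v π i - V v πs i| ≤ 2 * ε * vmax)
    (hε : 0 < ε) (hε' : ε ≤ 1/5) :
    NSW v π * ((1 / (n : ℝ)) * ∑ i, 1 / V v π i) ≤ 24 := by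
  classical
  have hFn : Nonempty (Fin n) := ⟨⟨0, hn⟩⟩
  obtain ⟨hjr, hub'⟩ := hvmax
  obtain ⟨j0, hj0⟩ := hjr
  have hub : ∀ j, v j ≤ vmax := fun j => hub' (Set.mem_range_self j)
  have hvmax0 : 0 < vmax := hj0 ▸ hv j0
  set T : ℝ := ∑ j, v j with hT
  set μ : ℝ := T / n with hμ
  have hm : 0 < m := lt_of_lt_of_le hn hnm
  have hT0 : 0 < T := Finset.sum_pos (fun j _ => hv j) ⟨⟨0, hm⟩, Finset.mem_univ _⟩
  have hn0 : (0:ℝ) < n := Nat.cast_pos.mpr hn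
  have hμ0 : 0 < μ := div_pos hT0 hn0
  have hcardpos : (0:ℝ) < 1 / (Fintype.card (Fin n)) := by
    rw [Fintype.card_fin]; positivity
  have hsum : ∀ π' : Fin m → Fin n, ∑ i, V v π' i = T := by
    intro π'
    unfold V
    exact Finset.sum_fiberwise _ _ _
  -- positivity of optimal valuations
  have hNSW0 : 0 < NSW v πs := by
    set π0 : Fin m → Fin n := fun j => ⟨j.val % n, Nat.mod_lt _ hn⟩ with hπ0
    have h0 : 0 < NSW v π0 := by
      apply Real.rpow_pos_of_pos
      apply Finset.prod_pos
      intro i _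
      have hgi : (⟨i.val, lt_of_lt_of_le i.isLt hnm⟩ : Fin m)
          ∈ Finset.univ.filter (fun j => π0 j = i) := by
        simp [hπ0, Fin.ext_iff, Nat.mod_eq_of_lt i.isLt]
      calc (0:ℝ) < v _ := hv _
        _ ≤ V v π0 i := Finset.single_le_sum (fun j _ => (hv j).le) hgi
    exact lt_of_lt_of_le h0 (hopt π0)
  have hPpos : 0 < ∏ i, V v πs i := by
    by_contra hprod
    push_neg at hprod
    have hz : ∏ i, V v πs i = 0 :=
      le_antisymm hprod (Finset.prod_nonneg fun i _ => V_nonneg v hv πs i)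
    rw [NSW, hz, Real.zero_rpow hcardpos.ne'] at hNSW0
    exact lt_irrefl 0 hNSW0
  have hVpos : ∀ i, 0 < V v πs i := by
    intro i
    rcases lt_or_eq_of_le (V_nonneg v hv πs i) with h | h
    · exact h
    · exact absurd (Finset.prod_eq_zero (Finset.mem_univ i) h.symm) hPpos.ne'
  -- exchange lemma
  have hex : ∀ (j : Fin m) (i : Fin n), πs j ≠ i → V v πs (πs j) ≤ V v πs i + v j := by
    intro j i hne
    set π' := Function.update πs j i with hπ'
    have hmono : ∏ l, V v π' l ≤ ∏ l, V v πs l := by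
      by_contra hlt'
      push_neg at hlt'
      have hstr := Real.rpow_lt_rpow
        (Finset.prod_nonneg fun l _ => V_nonneg v hv πs l) hlt' hcardpos
      exact absurd (hopt π') (not_le.mpr (by simpa [NSW] using hstr))
    set k := πs j with hk
    have hik : i ≠ k := fun h => hne h.symm
    have hkmem : k ∈ Finset.univ.erase i :=
      Finset.mem_erase.mpr ⟨hik.symm, Finset.mem_univ _⟩
    have split : ∀ f : Fin n → ℝ,
        ∏ l, f l = f i * (f k * ∏ l ∈ (Finset.univ.erase i).erase k, f l) := by
      intro f
      rw [← Finset.mul_prod_erase _ f (Finset.mem_univ i),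
          ← Finset.mul_prod_erase _ f hkmem]
    have hV'i : V v π' i = V v πs i + v j := by
      rw [hπ', V_update]
      simp [hne]
      exact fun h => absurd h hne
    have hV'k : V v π' k = V v πs k - v j := by
      rw [hπ', V_update, ← hk]
      simp [hik]
    have hV'other : ∀ l ∈ (Finset.univ.erase i).erase k, V v π' l = V v πs l := by
      intro l hl
      have hlk : l ≠ k := (Finset.mem_erase.mp hl).1
      have hli : l ≠ i := (Finset.mem_erase.mp (Finset.mem_erase.mp hl).2).1
      rw [hπ', V_update, ← hk]
      simp [hli.symm, hlk.symm]
    have hR : ∏ l ∈ (Finset.univ.erase i).erase k, V v π' l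
        = ∏ l ∈ (Finset.univ.erase i).erase k, V v πs l :=
      Finset.prod_congr rfl hV'other
    have hRpos : 0 < ∏ l ∈ (Finset.univ.erase i).erase k, V v πs l :=
      Finset.prod_pos fun l _ => hVpos l
    rw [split (V v π'), split (V v πs), hV'i, hV'k, hR] at hmono
    rw [← mul_assoc, ← mul_assoc] at hmono
    have h2 : (V v πs i + v j) * (V v πs k - v j) ≤ V v πs i * V v πs k :=
      (mul_le_mul_iff_of_pos_right hRpos).mp hmono
    nlinarith [hv j, h2]
  -- rich agent
  obtain ⟨k0, -, hk0⟩ : ∃ i ∈ Finset.univ, μ ≤ V v πs i := by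
    apply Finset.exists_le_of_sum_le Finset.univ_nonempty
    rw [hsum πs, Finset.sum_const, Finset.card_univ, Fintype.card_fin, nsmul_eq_mul]
    have : (n:ℝ) * μ = T := by rw [hμ]; field_simp
    linarith
  obtain ⟨i0, -, hi0⟩ : ∃ i ∈ Finset.univ, V v πs i ≤ μ := by
    apply Finset.exists_le_of_sum_le Finset.univ_nonempty
    rw [hsum πs, Finset.sum_const, Finset.card_univ, Fintype.card_fin, nsmul_eq_mul]
    have : (n:ℝ) * μ = T := by rw [hμ]; field_simp
    linarith
  -- k0 owns two goods
  set S := Finset.univ.filter (fun j => πs j = k0) with hS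
  have hVk0 : V v πs k0 = ∑ j ∈ S, v j := rfl
  have hcard : 2 ≤ S.card := by
    by_contra h
    push_neg at h
    have hsumS : ∑ j ∈ S, v j ≤ S.card • vmax :=
      Finset.sum_le_card_nsmul S v vmax (fun j _ => hub j)
    have h1 : (S.card : ℝ) ≤ 1 := by exact_mod_cast Nat.lt_succ_iff.mp h
    have h2 : V v πs k0 ≤ vmax := by
      rw [hVk0]
      calc ∑ j ∈ S, v j ≤ S.card • vmax := hsumS
        _ = (S.card : ℝ) * vmax := nsmul_eq_mul _ _
        _ ≤ 1 * vmax := by nlinarith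
        _ = vmax := one_mul _
    linarith
  obtain ⟨j1, hj1, j2, hj2, hjne⟩ := Finset.one_lt_card.mp hcard
  have hpair : v j1 + v j2 ≤ V v πs k0 := by
    rw [hVk0]
    have hsub : ({j1, j2} : Finset (Fin m)) ⊆ S := by
      intro x hx
      rcases Finset.mem_insert.mp hx with h | h
      · exact h ▸ hj1
      · exact (Finset.mem_singleton.mp h) ▸ hj2
    have := Finset.sum_le_sum_of_subset_of_nonneg hsub (fun j _ _ => (hv j).le)
    rwa [Finset.sum_pair hjne] at this
  obtain ⟨jm, hjm, hjm2⟩ : ∃ jm, πs jm = k0 ∧ 2 * v jm ≤ V v πs k0 := by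
    have hj1' : πs j1 = k0 := (Finset.mem_filter.mp hj1).2
    have hj2' : πs j2 = k0 := (Finset.mem_filter.mp hj2).2
    rcases le_total (v j1) (v j2) with h | h
    · exact ⟨j1, hj1', by linarith⟩
    · exact ⟨j2, hj2', by linarith⟩
  -- lower and upper bounds for optimal valuations
  have hlow : ∀ i, μ / 2 ≤ V v πs i := by
    intro i
    by_cases hi : k0 = i
    · rw [← hi]; linarith
    · have h := hex jm i (by rw [hjm]; exact hi)
      rw [hjm] at h
      linarith
  have hup : ∀ i, V v πs i ≤ μ + vmax := by
    intro i
    by_cases hi : V v πs i ≤ μ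
    · linarith
    · push_neg at hi
      rcases Finset.eq_empty_or_nonempty (Finset.univ.filter (fun j => πs j = i)) with he | hne
      · have : V v πs i = 0 := by unfold V; rw [he, Finset.sum_empty]
        linarith
      · obtain ⟨j, hj⟩ := hne
        have hji : πs j = i := (Finset.mem_filter.mp hj).2
        have hii0 : πs j ≠ i0 := by
          rw [hji]; intro h; rw [h] at hi; linarith
        have h := hex j i0 hii0
        rw [hji] at h
        linarith [hub j]
  -- bounds for π
  have hεv : 2 * ε * vmax ≤ (2/5) * vmax := by nlinarith
  have hA : ∀ i, μ/2 - (2/5) * vmax ≤ V v π i := by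
    intro i
    have h := abs_le.mp (hclose i)
    linarith [hlow i, h.1, h.2]
  have hB : ∀ i, V v π i ≤ μ + (7/5) * vmax := by
    intro i
    have h := abs_le.mp (hclose i)
    linarith [hup i, h.1, h.2]
  set A := μ/2 - (2/5) * vmax with hAdef
  set B := μ + (7/5) * vmax with hBdef
  have hA0 : 0 < A := by rw [hAdef]; linarith
  have hB0 : 0 < B := by rw [hBdef]; linarith
  have hBA : B ≤ 24 * A := by rw [hAdef, hBdef]; linarith
  have hnne : (n:ℝ) ≠ 0 := hn0.ne'
  -- NSW π ≤ B
  have hNSWle : NSW v π ≤ B := by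
    rw [NSW, Fintype.card_fin]
    have h1 : ∏ i, V v π i ≤ B ^ n := by
      calc ∏ i, V v π i ≤ ∏ _i : Fin n, B :=
            Finset.prod_le_prod (fun i _ => V_nonneg v hv π i) (fun i _ => hB i)
        _ = B ^ n := by rw [Finset.prod_const, Finset.card_univ, Fintype.card_fin]
    calc (∏ i, V v π i) ^ ((1:ℝ)/n)
        ≤ (B ^ n) ^ ((1:ℝ)/n) := by
          apply Real.rpow_le_rpow (Finset.prod_nonneg fun i _ => V_nonneg v hv π i) h1
          positivity
      _ = B := by
          rw [← Real.rpow_natCast B n, ← Real.rpow_mul hB0.le, mul_one_div,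
            div_self hnne, Real.rpow_one]
  have hsumle : (1/(n:ℝ)) * ∑ i, 1 / V v π i ≤ 1 / A := by
    have h1 : ∑ i, 1 / V v π i ≤ ∑ _i : Fin n, 1 / A :=
      Finset.sum_le_sum fun i _ => one_div_le_one_div_of_le hA0 (hA i)
    rw [Finset.sum_const, Finset.card_univ, Fintype.card_fin, nsmul_eq_mul] at h1
    have h2 : (1/(n:ℝ)) * ∑ i, 1 / V v π i ≤ (1/(n:ℝ)) * ((n:ℝ) * (1/A)) :=
      mul_le_mul_of_nonneg_left h1 (by positivity)
    have h3 : (1/(n:ℝ)) * ((n:ℝ) * (1/A)) = 1/A := by field_simp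
    linarith
  have hsumnn : 0 ≤ (1/(n:ℝ)) * ∑ i, 1 / V v π i := by
    apply mul_nonneg (by positivity)
    exact Finset.sum_nonneg fun i _ => one_div_nonneg.mpr (V_nonneg v hv π i)
  calc NSW v π * ((1/(n:ℝ)) * ∑ i, 1 / V v π i)
      ≤ B * (1/A) := mul_le_mul hNSWle hsumle hsumnn hB0.le
    _ ≤ 24 := by rw [mul_one_div, div_le_iff₀ hA0]; linarith
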